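/- arXiv:1402.3634 — 8 statements merged into one kernel-verified Lean document; each statement's English description precedes it below -/
import Mathlib

section
/- For every t > 0, the matrix C(t) = (t/n)·𝟙𝟙ᵀ + Σ_{p=2}^n ((1 − e^{−2λ_p t})/(2λ_p))·u⁽ᵖ⁾(u⁽ᵖ⁾)ᵀ (the covariance matrix of the coupled drift-diffusion model at time t, with unit diffusion rate) has 𝟙/√n as an eigenvector with eigenvalue t, and t is strictly its largest eigenvalue: for each p ∈ {2,…,n} one has (1 − e^{−2λ_p t})/(2λ_p) < t. Hence the first principal component of the coupled DDM corresponds to the eigenvector 𝟙/√n. -/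
open Finset Matrix

/-! The constant vector `𝟙/√n = u⁽¹⁾` is orthogonal to every other `u⁽ᵖ⁾`, so the entries of
each such `u⁽ᵖ⁾` sum to zero and only the term `(t/n)·𝟙𝟙ᵀ` acts on `𝟙`, with eigenvalue
`n · t/n = t`. The remaining coefficients are below `t` because `1 - e^{-x} < x` for `x ≠ 0`. -/

theorem Real.one_sub_exp_neg_lt {x : ℝ} (hx : x ≠ 0) : 1 - Real.exp (-x) < x := by
  linarith [Real.add_one_lt_exp (neg_ne_zero.mpr hx)]

theorem Real.one_sub_exp_neg_two_mul_div_lt {a t : ℝ} (ha : 0 < a) (ht : 0 < t) :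
    (1 - Real.exp (-2 * a * t)) / (2 * a) < t := by
  rw [div_lt_iff₀ (by positivity), neg_mul, neg_mul]
  linarith [Real.one_sub_exp_neg_lt (by positivity : 2 * a * t ≠ 0)]

theorem sum_eq_zero_of_sum_mul_const_eq_zero {ι : Type*} [Fintype ι] {v : ι → ℝ} {c : ℝ}
    (hc : c ≠ 0) (h : ∑ k, v k * c = 0) : ∑ k, v k = 0 := by
  rw [← Finset.sum_mul] at h
  exact (mul_eq_zero.mp h).resolve_right hc

theorem mulVec_const_of_sum_eq_zero {ι κ : Type*} [Fintype ι] (a b : ℝ) (s : Finset κ)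
    (c : κ → ℝ) (u : κ → ι → ℝ) (hu : ∀ p ∈ s, ∑ j, u p j = 0) :
    (Matrix.of fun i j => a + ∑ p ∈ s, c p * (u p i * u p j)) *ᵥ (fun _ => b) =
      (Fintype.card ι * a) • fun _ => b := by
  funext i
  have hrank_one : ∀ p ∈ s, ∑ j, c p * (u p i * u p j) * b = 0 := fun p hp => by
    simp_rw [mul_comm (u p i), ← mul_assoc, ← Finset.sum_mul, ← Finset.mul_sum, hu p hp]
    ring
  simp only [mulVec, dotProduct, of_apply, add_mul, Finset.sum_mul, Finset.sum_add_distrib]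
  rw [Finset.sum_comm, Finset.sum_eq_zero hrank_one, Finset.sum_const, Finset.card_univ]
  simp only [nsmul_eq_mul, Pi.smul_apply, smul_eq_mul, add_zero]
  ring

theorem coupledDDM_first_principal_component_general
    (n : ℕ) [NeZero n]
    (lam : Fin n → ℝ) (u : Fin n → Fin n → ℝ)
    (hlampos : ∀ p : Fin n, p ≠ 0 → 0 < lam p)
    (horth : ∀ p q : Fin n, ∑ k, u p k * u q k = if p = q then (1 : ℝ) else 0)
    (hu0 : u 0 = fun _ => 1 / Real.sqrt n)
    (t : ℝ) (ht : 0 < t) :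
    (Matrix.of fun i j =>
        t / n + ∑ p ∈ Finset.univ.erase (0 : Fin n),
          (1 - Real.exp (-2 * lam p * t)) / (2 * lam p) * (u p i * u p j)) *ᵥ
      (fun _ => 1 / Real.sqrt n) = t • (fun _ => 1 / Real.sqrt n) ∧
    (∀ p : Fin n, p ≠ 0 → (1 - Real.exp (-2 * lam p * t)) / (2 * lam p) < t) := by
  have hn : (n : ℝ) ≠ 0 := Nat.cast_ne_zero.mpr (NeZero.ne n)
  have hsum : ∀ p ∈ Finset.univ.erase (0 : Fin n), ∑ k, u p k = 0 := fun p hp => by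
    have hp0 := horth p 0
    rw [if_neg (Finset.ne_of_mem_erase hp), hu0] at hp0
    exact sum_eq_zero_of_sum_mul_const_eq_zero (by positivity) hp0
  refine ⟨?_, fun p hp => Real.one_sub_exp_neg_two_mul_div_lt (hlampos p hp) ht⟩
  rw [mulVec_const_of_sum_eq_zero _ _ _ _ _ hsum, Fintype.card_fin, mul_div_cancel₀ t hn]

/-- **First principal component of the coupled DDM.**
For every `t > 0`, the covariance matrix
`C(t) = (t/n)·𝟙𝟙ᵀ + Σ_{p≠1} ((1 − e^{−2λ_p t})/(2λ_p))·u⁽ᵖ⁾(u⁽ᵖ⁾)ᵀ`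
has `𝟙/√n` as an eigenvector with eigenvalue `t`, and for every `p ≠ 1` the coefficient
`(1 − e^{−2λ_p t})/(2λ_p)` is strictly less than `t`. -/
theorem coupledDDM_first_principal_component
    (n : ℕ) [NeZero n] (hn : 2 ≤ n)
    (L : Matrix (Fin n) (Fin n) ℝ)
    (hsymm : L.IsSymm) (hpsd : L.PosSemidef)
    (hL1 : L *ᵥ (fun _ => (1 : ℝ)) = 0)
    (hker : ∀ v : Fin n → ℝ, L *ᵥ v = 0 → ∃ c : ℝ, v = fun _ => c)
    (lam : Fin n → ℝ) (u : Fin n → Fin n → ℝ)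
    (hlam0 : lam 0 = 0)
    (hlampos : ∀ p : Fin n, p ≠ 0 → 0 < lam p)
    (hmono : Monotone lam)
    (heig : ∀ p : Fin n, L *ᵥ u p = lam p • u p)
    (horth : ∀ p q : Fin n, ∑ k, u p k * u q k = if p = q then (1 : ℝ) else 0)
    (hu0 : u 0 = fun _ => 1 / Real.sqrt n)
    (t : ℝ) (ht : 0 < t) :
    (Matrix.of fun i j =>
        t / n + ∑ p ∈ Finset.univ.erase (0 : Fin n),
          (1 - Real.exp (-2 * lam p * t)) / (2 * lam p) * (u p i * u p j)) *ᵥ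
      (fun _ => 1 / Real.sqrt n) = t • (fun _ => 1 / Real.sqrt n) ∧
    (∀ p : Fin n, p ≠ 0 → (1 - Real.exp (-2 * lam p * t)) / (2 * lam p) < t) :=
  coupledDDM_first_principal_component_general n lam u hlampos horth hu0 t ht
end

section
/- For every t ≥ 0 and every node k ∈ {1,…,n}, the (k,k) entry of ∫₀ᵗ e^{−Ls}(Iₙ − (1/n)𝟙𝟙ᵀ)e^{−Ls} ds equals Σ_{p=2}^n ((1 − e^{−2λ_p t})/(2λ_p))·(u_k⁽ᵖ⁾)². (This is the variance of the error ε_k(t) at node k in the coupled drift-diffusion model.) -/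
/-!
The orthonormal eigenvectors, as the rows of a matrix `V`, diagonalize simultaneously
`L = Vᵀ diag(λ) V`, `e^{-sL} = Vᵀ diag(e^{-sλ}) V` and, since `u⁽¹⁾ = 𝟙/√n`, the projector
`Iₙ - 𝟙𝟙ᵀ/n = Vᵀ diag(0, 1, …, 1) V`. Hence the integrand is `Vᵀ diag(0, e^{-2λ₂s}, …) V`, whose
`(k,k)` entry is `Σ_{p≥2} e^{-2λ_p s} (u_k⁽ᵖ⁾)²`, and the integral is computed termwise.
-/

open Finset Matrix

theorem intervalIntegral.integral_exp_mul_of_ne_zero {t c : ℝ} (hc : c ≠ 0) :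
    ∫ x in (0 : ℝ)..t, Real.exp (c * x) = (Real.exp (c * t) - 1) / c := by
  rw [intervalIntegral.integral_comp_mul_left Real.exp hc, integral_exp, smul_eq_mul, mul_zero,
    Real.exp_zero]
  field_simp

namespace Matrix

variable {ι : Type*} [Fintype ι] [DecidableEq ι] {V : Matrix ι ι ℝ}

theorem transpose_mul_diagonal_mul_apply (V : Matrix ι ι ℝ) (d : ι → ℝ) (i j : ι) :
    (Vᵀ * diagonal d * V) i j = ∑ p, d p * (V p i * V p j) := by
  rw [mul_apply]
  simp only [mul_diagonal, transpose_apply]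
  exact Finset.sum_congr rfl fun p _ => by ring

theorem transpose_mul_diagonal_mul_conj (hV : V * Vᵀ = 1) (d e : ι → ℝ) :
    Vᵀ * diagonal d * V * (Vᵀ * diagonal e * V) = Vᵀ * diagonal (d * e) * V := by
  simp only [Matrix.mul_assoc]
  rw [← Matrix.mul_assoc V, hV, Matrix.one_mul, ← Matrix.mul_assoc (diagonal d),
    diagonal_mul_diagonal]
  rfl

theorem exp_smul_transpose_mul_diagonal_mul (hV : V * Vᵀ = 1) (s : ℝ) (d : ι → ℝ) :
    NormedSpace.exp (s • (Vᵀ * diagonal d * V)) =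
      Vᵀ * diagonal (fun p => Real.exp (s * d p)) * V := by
  have hunit : IsUnit V := (isUnit_iff_isUnit_det V).2 (isUnit_det_of_right_inverse hV)
  rw [← smul_mul_assoc, ← mul_smul_comm, ← diagonal_smul, Real.exp_eq_exp_ℝ,
    ← inv_eq_right_inv hV, exp_conj' V _ hunit, exp_diagonal, Pi.exp_def]
  rfl

theorem eq_transpose_mul_diagonal_mul {L : Matrix ι ι ℝ} (hV : V * Vᵀ = 1) {lam : ι → ℝ}
    (heig : ∀ p, L *ᵥ V p = lam p • V p) : L = Vᵀ * diagonal lam * V := by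
  have hLV : L * Vᵀ = Vᵀ * diagonal lam := by
    ext i p
    rw [mul_diagonal]
    simpa [mul_apply, mulVec, dotProduct, mul_comm] using congrFun (heig p) i
  rw [← hLV, Matrix.mul_assoc, mul_eq_one_comm.1 hV, Matrix.mul_one]

theorem one_sub_vecMulVec_eq_transpose_mul_diagonal_mul (hV : V * Vᵀ = 1) (p₀ : ι) :
    1 - vecMulVec (V p₀) (V p₀) = Vᵀ * diagonal (fun p => if p = p₀ then 0 else 1) * V := by
  ext i j
  have hone : (1 : Matrix ι ι ℝ) i j = ∑ p, V p i * V p j := by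
    rw [← mul_eq_one_comm.1 hV, mul_apply]
    rfl
  rw [transpose_mul_diagonal_mul_apply, sub_apply, hone, vecMulVec_apply,
    ← Finset.sum_erase_eq_sub (mem_univ p₀)]
  simp [ite_mul, Finset.sum_ite, Finset.filter_ne']

theorem one_sub_of_inv_eq_transpose_mul_diagonal_mul {n : ℕ} [NeZero n]
    {V : Matrix (Fin n) (Fin n) ℝ} (hV : V * Vᵀ = 1) (hV0 : V 0 = fun _ => 1 / Real.sqrt n) :
    1 - of (fun _ _ => (1 : ℝ) / n) = Vᵀ * diagonal (fun p => if p = 0 then 0 else 1) * V := by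
  rw [← one_sub_vecMulVec_eq_transpose_mul_diagonal_mul hV, hV0]
  congr 1
  ext i j
  simp [vecMulVec_apply, ← mul_inv, Real.mul_self_sqrt (Nat.cast_nonneg n)]

end Matrix

theorem coupledDDM_error_variance_general
    (n : ℕ) [NeZero n]
    (L : Matrix (Fin n) (Fin n) ℝ)
    (lam : Fin n → ℝ) (u : Fin n → Fin n → ℝ)
    (hlampos : ∀ p : Fin n, p ≠ 0 → 0 < lam p)
    (heig : ∀ p : Fin n, L *ᵥ u p = lam p • u p)
    (horth : ∀ p q : Fin n, ∑ k, u p k * u q k = if p = q then (1 : ℝ) else 0)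
    (hu0 : u 0 = fun _ => 1 / Real.sqrt n)
    (t : ℝ) (k : Fin n) :
    ∫ s in (0:ℝ)..t,
        (((NormedSpace.exp ((-s) • L)) *
          ((1 : Matrix (Fin n) (Fin n) ℝ) - Matrix.of fun _ _ => (1 : ℝ) / n) *
          (NormedSpace.exp ((-s) • L)) : Matrix (Fin n) (Fin n) ℝ)) k k
      = ∑ p ∈ Finset.univ.erase (0 : Fin n),
          (1 - Real.exp (-2 * lam p * t)) / (2 * lam p) * (u p k) ^ 2 := by
  set V : Matrix (Fin n) (Fin n) ℝ := of u
  have hV : V * Vᵀ = 1 := by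
    ext p q
    simp [V, mul_apply, horth, one_apply]
  have hintegrand (s : ℝ) : (NormedSpace.exp ((-s) • L) *
      ((1 : Matrix (Fin n) (Fin n) ℝ) - Matrix.of fun _ _ => (1 : ℝ) / n) *
      NormedSpace.exp ((-s) • L) : Matrix (Fin n) (Fin n) ℝ) k k =
      ∑ p ∈ Finset.univ.erase (0 : Fin n), Real.exp (-2 * lam p * s) * u p k ^ 2 := by
    rw [eq_transpose_mul_diagonal_mul hV heig, exp_smul_transpose_mul_diagonal_mul hV,
      one_sub_of_inv_eq_transpose_mul_diagonal_mul hV hu0, transpose_mul_diagonal_mul_conj hV,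
      transpose_mul_diagonal_mul_conj hV, transpose_mul_diagonal_mul_apply]
    simp only [Pi.mul_apply, mul_ite, mul_one, mul_zero, ite_mul, zero_mul, Finset.sum_ite,
      filter_ne', sum_const_zero, zero_add]
    refine Finset.sum_congr rfl fun p _ => ?_
    rw [← Real.exp_add]
    simp only [V, of_apply]
    ring_nf
  have hterm (p : Fin n) (hp : p ∈ Finset.univ.erase 0) :
      ∫ s in (0 : ℝ)..t, Real.exp (-2 * lam p * s) * u p k ^ 2 =
        (1 - Real.exp (-2 * lam p * t)) / (2 * lam p) * u p k ^ 2 := by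
    have hlp : lam p ≠ 0 := (hlampos p (Finset.ne_of_mem_erase hp)).ne'
    rw [intervalIntegral.integral_mul_const,
      intervalIntegral.integral_exp_mul_of_ne_zero (by simpa using hlp)]
    field_simp
    ring
  rw [intervalIntegral.integral_congr fun s _ => hintegrand s,
    intervalIntegral.integral_finsetSum fun p _ =>
      (by fun_prop : Continuous _).intervalIntegrable 0 t]
  exact Finset.sum_congr rfl hterm

/-- **Variance of the error at node `k` in the coupled DDM.**
For every `t ≥ 0` and node `k`, the `(k,k)` entry of
`∫₀ᵗ e^{−Ls}(Iₙ − (1/n)𝟙𝟙ᵀ)e^{−Ls} ds` equals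
`Σ_{p≠1} ((1 − e^{−2λ_p t})/(2λ_p))·(u_k⁽ᵖ⁾)²`. -/
theorem coupledDDM_error_variance
    (n : ℕ) [NeZero n] (hn : 2 ≤ n)
    (L : Matrix (Fin n) (Fin n) ℝ)
    (hsymm : L.IsSymm) (hpsd : L.PosSemidef)
    (hL1 : L *ᵥ (fun _ => (1 : ℝ)) = 0)
    (hker : ∀ v : Fin n → ℝ, L *ᵥ v = 0 → ∃ c : ℝ, v = fun _ => c)
    (lam : Fin n → ℝ) (u : Fin n → Fin n → ℝ)
    (hlam0 : lam 0 = 0)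
    (hlampos : ∀ p : Fin n, p ≠ 0 → 0 < lam p)
    (hmono : Monotone lam)
    (heig : ∀ p : Fin n, L *ᵥ u p = lam p • u p)
    (horth : ∀ p q : Fin n, ∑ k, u p k * u q k = if p = q then (1 : ℝ) else 0)
    (hu0 : u 0 = fun _ => 1 / Real.sqrt n)
    (t : ℝ) (ht : 0 ≤ t) (k : Fin n) :
    ∫ s in (0:ℝ)..t,
        (((NormedSpace.exp ((-s) • L)) *
          ((1 : Matrix (Fin n) (Fin n) ℝ) - Matrix.of fun _ _ => (1 : ℝ) / n) *
          (NormedSpace.exp ((-s) • L)) : Matrix (Fin n) (Fin n) ℝ)) k k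
      = ∑ p ∈ Finset.univ.erase (0 : Fin n),
          (1 - Real.exp (-2 * lam p * t)) / (2 * lam p) * (u p k) ^ 2 :=
  coupledDDM_error_variance_general n L lam u hlampos heig horth hu0 t k
end

section
/- Let v_k(t) = t/n + Σ_{p=2}^n ((1 − e^{−2λ_p t})/(2λ_p))·(u_k⁽ᵖ⁾)² denote the variance of the evidence x_k(t) at node k of the coupled drift-diffusion model with unit diffusion rate. Then for every node k ∈ {1,…,n}, lim_{t→∞} v_k(t)/t = 1/n, i.e., the normalized variance at each node converges to the variance rate 1/n of the centralized drift-diffusion model. -/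
open Finset Filter Matrix

/-- **Normalized variance at each node converges to the centralized variance rate.**
With `v_k(t) = t/n + Σ_{p≠1} ((1 − e^{−2λ_p t})/(2λ_p))·(u_k⁽ᵖ⁾)²` the variance of the
evidence at node `k` of the coupled DDM, `v_k(t)/t → 1/n` as `t → ∞`. -/
theorem coupledDDM_normalized_variance_tendsto
    (n : ℕ) [NeZero n] (hn : 2 ≤ n)
    (L : Matrix (Fin n) (Fin n) ℝ)
    (hsymm : L.IsSymm) (hpsd : L.PosSemidef)
    (hL1 : L *ᵥ (fun _ => (1 : ℝ)) = 0)
    (hker : ∀ v : Fin n → ℝ, L *ᵥ v = 0 → ∃ c : ℝ, v = fun _ => c)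
    (lam : Fin n → ℝ) (u : Fin n → Fin n → ℝ)
    (hlam0 : lam 0 = 0)
    (hlampos : ∀ p : Fin n, p ≠ 0 → 0 < lam p)
    (hmono : Monotone lam)
    (heig : ∀ p : Fin n, L *ᵥ u p = lam p • u p)
    (horth : ∀ p q : Fin n, ∑ k, u p k * u q k = if p = q then (1 : ℝ) else 0)
    (hu0 : u 0 = fun _ => 1 / Real.sqrt n)
    (k : Fin n) :
    Tendsto (fun t : ℝ =>
        (t / n + ∑ p ∈ Finset.univ.erase (0 : Fin n),
          (1 - Real.exp (-2 * lam p * t)) / (2 * lam p) * (u p k) ^ 2) / t)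
      atTop (nhds (1 / n)) := by
  have hS : Tendsto (fun t : ℝ =>
      (∑ p ∈ Finset.univ.erase (0 : Fin n),
        (1 - Real.exp (-2 * lam p * t)) / (2 * lam p) * (u p k) ^ 2) / t)
      atTop (nhds 0) := by
    have : Tendsto (fun t : ℝ =>
        ∑ p ∈ Finset.univ.erase (0 : Fin n),
          ((1 - Real.exp (-2 * lam p * t)) / (2 * lam p) * (u p k) ^ 2) / t)
        atTop (nhds (∑ p ∈ Finset.univ.erase (0 : Fin n), (0 : ℝ))) := by
      refine tendsto_finset_sum _ (fun p hp => ?_)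
      have hpos := hlampos p (Finset.mem_erase.mp hp).1
      have hnum : Tendsto (fun t : ℝ =>
          (1 - Real.exp (-2 * lam p * t)) / (2 * lam p) * (u p k) ^ 2) atTop
          (nhds ((1 - 0) / (2 * lam p) * (u p k) ^ 2)) := by
        refine Tendsto.mul (Tendsto.div_const (Tendsto.const_sub _ ?_) _) tendsto_const_nhds
        have : Tendsto (fun t : ℝ => -2 * lam p * t) atTop atBot :=
          tendsto_id.const_mul_atTop_of_neg (by linarith)
        exact Real.tendsto_exp_atBot.comp this
      exact hnum.div_atTop tendsto_id
    simpa only [← Finset.sum_div, Finset.sum_const_zero] using this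
  have h1n : Tendsto (fun t : ℝ => t / n / t) atTop (nhds (1 / n)) := by
    have : ∀ᶠ t : ℝ in atTop, t / n / t = 1 / n := by
      filter_upwards [eventually_gt_atTop 0] with t ht
      field_simp
    exact tendsto_const_nhds.congr' (this.mono fun t ht => ht.symm)
  have := h1n.add hS
  simp only [add_zero] at this
  refine this.congr (fun t => ?_)
  rw [add_div]
end

section
/- (Asymptotic optimality of the coupled DDM.) For each node k ∈ {1,…,n}, the law of (x_k(t) − βt)/√t, which is the centered Gaussian measure on ℝ with variance v_k(t)/t where v_k(t) = t/n + Σ_{p=2}^n ((1 − e^{−2λ_p t})/(2λ_p))·(u_k⁽ᵖ⁾)², converges weakly as t → ∞ to the centered Gaussian measure on ℝ with variance 1/n, which is the law of (x_cen(t) − βt)/√t for the centralized drift-diffusion model. -/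
open Finset Filter Matrix MeasureTheory ProbabilityTheory
open scoped NNReal Topology

/-!
Both laws are centred Gaussians, and by Lévy's continuity theorem the Gaussian law depends
continuously on its variance, so it suffices that `v_k(t) / t → 1 / n`. This holds because each
mode `p ≠ 0` contributes to `v_k(t)` an amount increasing to the finite limit
`(u_k⁽ᵖ⁾)² / (2 λ_p)`, which vanishes after division by `t`.
-/

open Complex in
theorem continuous_gaussianReal :
    Continuous (Y := ProbabilityMeasure ℝ)
      fun p : ℝ × ℝ≥0 => ⟨gaussianReal p.1 p.2, inferInstance⟩ := by
  refine continuous_iff_seqContinuous.mpr fun {x p} hx => ?_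
  refine ProbabilityMeasure.tendsto_iff_tendsto_charFun.mpr fun t => ?_
  show Tendsto (fun n => charFun (gaussianReal (x n).1 (x n).2) t) atTop _
  simp only [ProbabilityMeasure.coe_mk, charFun_gaussianReal]
  have hcharFun : Continuous fun q : ℝ × ℝ≥0 => cexp (t * q.1 * I - q.2 * t ^ 2 / 2) := by
    fun_prop
  exact (hcharFun.tendsto p).comp hx

theorem tendsto_one_sub_exp_div_atTop {a : ℝ} (ha : 0 < a) :
    Tendsto (fun t => (1 - Real.exp (-2 * a * t)) / (2 * a)) atTop (𝓝 (1 / (2 * a))) := by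
  have hexp : Tendsto (fun t => Real.exp (-2 * a * t)) atTop (𝓝 0) :=
    Real.tendsto_exp_atBot.comp (tendsto_id.const_mul_atTop_of_neg (by linarith))
  simpa only [sub_zero] using (tendsto_const_nhds (x := (1 : ℝ)).sub hexp).div_const (2 * a)

theorem tendsto_sum_one_sub_exp_div_mul_div_atTop {ι : Type*} (s : Finset ι) {a : ι → ℝ}
    (c : ι → ℝ) (ha : ∀ p ∈ s, 0 < a p) :
    Tendsto (fun t => (∑ p ∈ s, (1 - Real.exp (-2 * a p * t)) / (2 * a p) * c p) / t)
      atTop (𝓝 0) :=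
  (tendsto_finsetSum s fun p hp =>
    (tendsto_one_sub_exp_div_atTop (ha p hp)).mul_const (c p)).div_atTop tendsto_id

theorem coupledDDM_asymptotic_optimality_general
    (n : ℕ) [NeZero n]
    (lam : Fin n → ℝ) (u : Fin n → Fin n → ℝ)
    (hlampos : ∀ p : Fin n, p ≠ 0 → 0 < lam p)
    (k : Fin n) :
    Tendsto (fun t : ℝ =>
        (⟨gaussianReal 0 (((t / n + ∑ p ∈ Finset.univ.erase (0 : Fin n),
            (1 - Real.exp (-2 * lam p * t)) / (2 * lam p) * (u p k) ^ 2) / t).toNNReal),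
          inferInstance⟩ : ProbabilityMeasure ℝ))
      atTop
      (nhds (X := ProbabilityMeasure ℝ) (⟨gaussianReal 0 ((1 : ℝ≥0) / n), inferInstance⟩ : ProbabilityMeasure ℝ)) := by
  have hfluct := tendsto_sum_one_sub_exp_div_mul_div_atTop (univ.erase 0) (fun p => u p k ^ 2)
    fun p hp => hlampos p (ne_of_mem_erase hp)
  have hvar : Tendsto (fun t : ℝ => (t / n + ∑ p ∈ univ.erase (0 : Fin n),
      (1 - Real.exp (-2 * lam p * t)) / (2 * lam p) * u p k ^ 2) / t) atTop (𝓝 (1 / n)) := by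
    refine (add_zero (1 / (n : ℝ)) ▸ tendsto_const_nhds.add hfluct).congr' ?_
    filter_upwards [eventually_gt_atTop 0] with t ht
    rw [add_div, div_right_comm, div_self ht.ne']
  have hlimit : ((1 : ℝ≥0) / n) = (1 / n : ℝ).toNNReal := by
    simp [Real.toNNReal_inv]
  rw [hlimit]
  exact (continuous_gaussianReal.tendsto (0, _)).comp
    (tendsto_const_nhds.prodMk_nhds ((continuous_real_toNNReal.tendsto _).comp hvar))

/-- **Asymptotic optimality of the coupled DDM.**
For each node `k`, the law of `(x_k(t) − βt)/√t`, i.e. the centered Gaussian measure with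
variance `v_k(t)/t` where `v_k(t) = t/n + Σ_{p≠1} ((1 − e^{−2λ_p t})/(2λ_p))·(u_k⁽ᵖ⁾)²`,
converges weakly as `t → ∞` to the centered Gaussian measure with variance `1/n`, the law of
`(x_cen(t) − βt)/√t` for the centralized DDM. -/
theorem coupledDDM_asymptotic_optimality
    (n : ℕ) [NeZero n] (hn : 2 ≤ n) (β : ℝ)
    (L : Matrix (Fin n) (Fin n) ℝ)
    (hsymm : L.IsSymm) (hpsd : L.PosSemidef)
    (hL1 : L *ᵥ (fun _ => (1 : ℝ)) = 0)
    (hker : ∀ v : Fin n → ℝ, L *ᵥ v = 0 → ∃ c : ℝ, v = fun _ => c)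
    (lam : Fin n → ℝ) (u : Fin n → Fin n → ℝ)
    (hlam0 : lam 0 = 0)
    (hlampos : ∀ p : Fin n, p ≠ 0 → 0 < lam p)
    (hmono : Monotone lam)
    (heig : ∀ p : Fin n, L *ᵥ u p = lam p • u p)
    (horth : ∀ p q : Fin n, ∑ k, u p k * u q k = if p = q then (1 : ℝ) else 0)
    (hu0 : u 0 = fun _ => 1 / Real.sqrt n)
    (k : Fin n) :
    Tendsto (fun t : ℝ =>
        (⟨gaussianReal 0 (((t / n + ∑ p ∈ Finset.univ.erase (0 : Fin n),
            (1 - Real.exp (-2 * lam p * t)) / (2 * lam p) * (u p k) ^ 2) / t).toNNReal),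
          inferInstance⟩ : ProbabilityMeasure ℝ))
      atTop
      (nhds (X := ProbabilityMeasure ℝ) (⟨gaussianReal 0 ((1 : ℝ≥0) / n), inferInstance⟩ : ProbabilityMeasure ℝ)) :=
  coupledDDM_asymptotic_optimality_general n lam u hlampos k
end

section
/- (Exponential convergence of the error variance.) For every node k ∈ {1,…,n} and every t ≥ 0, the error variance g_k(t) = Σ_{p=2}^n ((1 − e^{−2λ_p t})/(2λ_p))·(u_k⁽ᵖ⁾)² satisfies |g_k(t) − 1/μ_k| ≤ e^{−2λ₂ t}/μ_k, where λ₂ is the smallest positive eigenvalue of L; in particular g_k(t) converges exponentially to 1/μ_k as t → ∞. -/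
open Finset Matrix

/-!
Subtracting the limit `1/μ_k = Σ_p (u_k⁽ᵖ⁾)²/(2λ_p)` from `g_k(t)` leaves
`-Σ_p e^{-2λ_p t} (u_k⁽ᵖ⁾)²/(2λ_p)`, a sum of nonnegative terms. Since every `λ_p` in the
sum is at least `λ₂`, each factor `e^{-2λ_p t}` is at most `e^{-2λ₂ t}`, which pulls out
of the sum and leaves `e^{-2λ₂ t}/μ_k`.
-/

section TransientDecay

variable {ι : Type*} (s : Finset ι) (lam w : ι → ℝ) (t : ℝ)

-- An identity of rational functions, valid even at `lam p = 0` thanks to `x / 0 = 0`.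
theorem sum_one_sub_exp_div_mul_sub_sum_div :
    ∑ p ∈ s, (1 - Real.exp (-2 * lam p * t)) / (2 * lam p) * w p - ∑ p ∈ s, w p / (2 * lam p)
      = -∑ p ∈ s, Real.exp (-2 * lam p * t) / (2 * lam p) * w p := by
  rw [← sum_sub_distrib, ← sum_neg_distrib]
  exact sum_congr rfl fun p _ => by ring

theorem abs_sum_one_sub_exp_div_mul_sub_sum_div_le {lmin : ℝ}
    (hlam : ∀ p ∈ s, 0 ≤ lam p) (hmin : ∀ p ∈ s, lmin ≤ lam p) (hw : ∀ p ∈ s, 0 ≤ w p)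
    (ht : 0 ≤ t) :
    |∑ p ∈ s, (1 - Real.exp (-2 * lam p * t)) / (2 * lam p) * w p - ∑ p ∈ s, w p / (2 * lam p)|
      ≤ Real.exp (-2 * lmin * t) * ∑ p ∈ s, w p / (2 * lam p) := by
  have hweight : ∀ p ∈ s, 0 ≤ w p / (2 * lam p) := fun p hp =>
    div_nonneg (hw p hp) (mul_nonneg zero_le_two (hlam p hp))
  have hterm : ∀ p ∈ s, 0 ≤ Real.exp (-2 * lam p * t) / (2 * lam p) * w p := fun p hp => by
    rw [div_mul_eq_mul_div, mul_div_assoc]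
    exact mul_nonneg (Real.exp_nonneg _) (hweight p hp)
  rw [sum_one_sub_exp_div_mul_sub_sum_div, abs_neg, abs_of_nonneg (sum_nonneg hterm), mul_sum]
  refine sum_le_sum fun p hp => ?_
  have hexp : Real.exp (-2 * lam p * t) ≤ Real.exp (-2 * lmin * t) :=
    Real.exp_le_exp.mpr (by nlinarith [hmin p hp])
  calc Real.exp (-2 * lam p * t) / (2 * lam p) * w p
      = Real.exp (-2 * lam p * t) * (w p / (2 * lam p)) := by ring
    _ ≤ Real.exp (-2 * lmin * t) * (w p / (2 * lam p)) :=
        mul_le_mul_of_nonneg_right hexp (hweight p hp)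

end TransientDecay

theorem coupledDDM_error_variance_exponential_convergence
    (n : ℕ) [NeZero n] (hn : 2 ≤ n)
    (lam : Fin n → ℝ) (u : Fin n → Fin n → ℝ)
    (hlampos : ∀ p : Fin n, p ≠ 0 → 0 < lam p)
    (hmono : Monotone lam)
    (k : Fin n) (μ : ℝ)
    (hμ : 1 / μ = ∑ p ∈ Finset.univ.erase (0 : Fin n), (u p k) ^ 2 / (2 * lam p))
    (t : ℝ) (ht : 0 ≤ t) :
    |(∑ p ∈ Finset.univ.erase (0 : Fin n),
        (1 - Real.exp (-2 * lam p * t)) / (2 * lam p) * (u p k) ^ 2) - 1 / μ|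
      ≤ Real.exp (-2 * lam (⟨1, by omega⟩ : Fin n) * t) / μ := by
  have hgap : ∀ p ∈ univ.erase (0 : Fin n), lam ⟨1, by omega⟩ ≤ lam p := fun p hp =>
    hmono (Nat.one_le_iff_ne_zero.mpr (Fin.val_ne_zero_iff.mpr (ne_of_mem_erase hp)))
  rw [div_eq_mul_one_div (Real.exp _), hμ]
  exact abs_sum_one_sub_exp_div_mul_sub_sum_div_le _ _ _ t
    (fun p hp => (hlampos p (ne_of_mem_erase hp)).le) hgap (fun _ _ => sq_nonneg _) ht
end

section
/- (Steady-state correlation between the error and its Ornstein–Uhlenbeck approximation.) Fix a node k ∈ {1,…,n}. Define f(t) = Σ_{p=1}^n ((1 − e^{−2λ̃_p t})/(2λ̃_p))·(ũ_k⁽ᵖ⁾)² − 2(1 − e^{−μ_k t/2})/(n μ_k) (the cross-covariance E[ε_k(t)ε̃_k(t)]), g(t) = Σ_{p=2}^n ((1 − e^{−2λ_p t})/(2λ_p))·(u_k⁽ᵖ⁾)² (the variance of ε_k(t)), and h(t) = (1 − e^{−μ_k t})/μ_k (the variance of ε̃_k(t)). Then lim_{t→∞} f(t)/√(g(t)·h(t))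 = μ_k · Σ_{p=1}^n (ũ_k⁽ᵖ⁾)²/(2λ̃_p) − 2/n. -/
/-!
Every exponential in `f`, `g`, `h` decays, so `f → Σ_p (ũ_k⁽ᵖ⁾)²/(2λ̃_p) − 2/(n μ_k)`, while
`g → Σ_{p≥2} (u_k⁽ᵖ⁾)²/(2λ_p) = 1/μ_k` by the definition of `μ_k` and `h → 1/μ_k`.
The denominator therefore tends to `1/μ_k`, and the ratio to `μ_k` times the limit of `f`.
-/

open Finset Filter Matrix

open Real Topology

lemma tendsto_exp_mul_atTop_nhds_zero {c : ℝ} (hc : c < 0) :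
    Tendsto (fun t : ℝ => exp (c * t)) atTop (𝓝 0) :=
  tendsto_exp_atBot.comp (tendsto_id.const_mul_atTop_of_neg hc)

lemma tendsto_one_sub_exp_mul_div {c : ℝ} (hc : c < 0) (d : ℝ) :
    Tendsto (fun t : ℝ => (1 - exp (c * t)) / d) atTop (𝓝 (1 / d)) := by
  simpa using ((tendsto_exp_mul_atTop_nhds_zero hc).const_sub 1).div_const d

lemma tendsto_sum_one_sub_exp_div {ι : Type*} (s : Finset ι) {a : ι → ℝ}
    (ha : ∀ p ∈ s, 0 < a p) (w : ι → ℝ) :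
    Tendsto (fun t : ℝ => ∑ p ∈ s, (1 - exp (-2 * a p * t)) / (2 * a p) * w p) atTop
      (𝓝 (∑ p ∈ s, w p / (2 * a p))) := by
  refine tendsto_finsetSum s fun p hp => ?_
  have hc : -2 * a p < 0 := by linarith [ha p hp]
  convert (tendsto_one_sub_exp_mul_div hc (2 * a p)).mul_const (w p) using 2; ring

lemma tendsto_div_sqrt_mul {f g h : ℝ → ℝ} {F m : ℝ} (hm : 0 < m)
    (hf : Tendsto f atTop (𝓝 F)) (hg : Tendsto g atTop (𝓝 (1 / m)))
    (hh : Tendsto h atTop (𝓝 (1 / m))) :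
    Tendsto (fun t => f t / √(g t * h t)) atTop (𝓝 (m * F)) := by
  have hsqrt : Tendsto (fun t => √(g t * h t)) atTop (𝓝 (1 / m)) := by
    simpa only [sqrt_mul_self (one_div_pos.2 hm).le] using (hg.mul hh).sqrt
  have h := hf.div hsqrt (one_div_pos.2 hm).ne'
  rwa [div_div_eq_mul_div, div_one, mul_comm] at h

theorem coupledDDM_steady_state_correlation_general
    (n : ℕ) [NeZero n]
    (lam : Fin n → ℝ) (u : Fin n → Fin n → ℝ)
    (hlampos : ∀ p : Fin n, p ≠ 0 → 0 < lam p)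
    (mu : Fin n → ℝ) (hmupos : ∀ k, 0 < mu k)
    (hmu : ∀ k, 1 / mu k = ∑ p ∈ Finset.univ.erase (0 : Fin n), (u p k) ^ 2 / (2 * lam p))
    (tlam : Fin n → ℝ) (tu : Fin n → Fin n → ℝ)
    (htlampos : ∀ p : Fin n, 0 < tlam p)
    (k : Fin n) :
    Tendsto (fun t : ℝ =>
        ((∑ p : Fin n, (1 - Real.exp (-2 * tlam p * t)) / (2 * tlam p) * (tu p k) ^ 2)
            - 2 * (1 - Real.exp (-(mu k) * t / 2)) / (n * mu k)) /
          Real.sqrt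
            ((∑ p ∈ Finset.univ.erase (0 : Fin n),
                (1 - Real.exp (-2 * lam p * t)) / (2 * lam p) * (u p k) ^ 2) *
              ((1 - Real.exp (-(mu k) * t)) / mu k)))
      atTop
      (nhds (mu k * ∑ p : Fin n, (tu p k) ^ 2 / (2 * tlam p) - 2 / n)) := by
  have hm := hmupos k
  have hcross : Tendsto (fun t : ℝ =>
      (∑ p : Fin n, (1 - exp (-2 * tlam p * t)) / (2 * tlam p) * (tu p k) ^ 2)
        - 2 * (1 - exp (-(mu k) * t / 2)) / (n * mu k)) atTop
      (𝓝 ((∑ p : Fin n, (tu p k) ^ 2 / (2 * tlam p)) - 2 * (1 / (n * mu k)))) := by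
    refine (tendsto_sum_one_sub_exp_div _ (fun p _ => htlampos p) _).sub ?_
    have hc : -(mu k) / 2 < 0 := by linarith
    convert (tendsto_one_sub_exp_mul_div hc (n * mu k)).const_mul 2 using 2
    rw [div_mul_eq_mul_div, mul_div_assoc]
  have hvar : Tendsto (fun t : ℝ => ∑ p ∈ univ.erase (0 : Fin n),
      (1 - exp (-2 * lam p * t)) / (2 * lam p) * (u p k) ^ 2) atTop (𝓝 (1 / mu k)) :=
    hmu k ▸ tendsto_sum_one_sub_exp_div _ (fun p hp => hlampos p (ne_of_mem_erase hp)) _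
  have hou := tendsto_one_sub_exp_mul_div (neg_lt_zero.2 hm) (mu k)
  convert tendsto_div_sqrt_mul hm hcross hvar hou using 2
  field_simp

/-- **Steady-state correlation between the error and its O–U approximation.**
With `f(t) = Σ_p ((1 − e^{−2λ̃_p t})/(2λ̃_p))·(ũ_k⁽ᵖ⁾)² − 2(1 − e^{−μ_k t/2})/(n μ_k)`
(the cross-covariance), `g(t) = Σ_{p≠1} ((1 − e^{−2λ_p t})/(2λ_p))·(u_k⁽ᵖ⁾)²` (the variance of
`ε_k(t)`) and `h(t) = (1 − e^{−μ_k t})/μ_k` (the variance of `ε̃_k(t)`),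
`f(t)/√(g(t)h(t)) → μ_k Σ_p (ũ_k⁽ᵖ⁾)²/(2λ̃_p) − 2/n` as `t → ∞`. -/
theorem coupledDDM_steady_state_correlation
    (n : ℕ) [NeZero n] (hn : 2 ≤ n)
    (L : Matrix (Fin n) (Fin n) ℝ)
    (hsymm : L.IsSymm) (hpsd : L.PosSemidef)
    (hL1 : L *ᵥ (fun _ => (1 : ℝ)) = 0)
    (hker : ∀ v : Fin n → ℝ, L *ᵥ v = 0 → ∃ c : ℝ, v = fun _ => c)
    (lam : Fin n → ℝ) (u : Fin n → Fin n → ℝ)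
    (hlam0 : lam 0 = 0)
    (hlampos : ∀ p : Fin n, p ≠ 0 → 0 < lam p)
    (hmono : Monotone lam)
    (heig : ∀ p : Fin n, L *ᵥ u p = lam p • u p)
    (horth : ∀ p q : Fin n, ∑ j, u p j * u q j = if p = q then (1 : ℝ) else 0)
    (hu0 : u 0 = fun _ => 1 / Real.sqrt n)
    (mu : Fin n → ℝ) (hmupos : ∀ k, 0 < mu k)
    (hmu : ∀ k, 1 / mu k = ∑ p ∈ Finset.univ.erase (0 : Fin n), (u p k) ^ 2 / (2 * lam p))
    (tlam : Fin n → ℝ) (tu : Fin n → Fin n → ℝ)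
    (htpos : (L + Matrix.diagonal (fun j => mu j / 2)).PosDef)
    (htlampos : ∀ p : Fin n, 0 < tlam p)
    (hteig : ∀ p : Fin n, (L + Matrix.diagonal (fun j => mu j / 2)) *ᵥ tu p = tlam p • tu p)
    (htorth : ∀ p q : Fin n, ∑ j, tu p j * tu q j = if p = q then (1 : ℝ) else 0)
    (k : Fin n) :
    Tendsto (fun t : ℝ =>
        ((∑ p : Fin n, (1 - Real.exp (-2 * tlam p * t)) / (2 * tlam p) * (tu p k) ^ 2)
            - 2 * (1 - Real.exp (-(mu k) * t / 2)) / (n * mu k)) /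
          Real.sqrt
            ((∑ p ∈ Finset.univ.erase (0 : Fin n),
                (1 - Real.exp (-2 * lam p * t)) / (2 * lam p) * (u p k) ^ 2) *
              ((1 - Real.exp (-(mu k) * t)) / mu k)))
      atTop
      (nhds (mu k * ∑ p : Fin n, (tu p k) ^ 2 / (2 * tlam p) - 2 / n)) :=
  coupledDDM_steady_state_correlation_general n lam u hlampos mu hmupos hmu tlam tu htlampos k
end

section
/- For every z > 0, the function ψ(z) = ∫₀^z ∫₀^τ e^{τ²} e^{−s²} ds dτ satisfies the lower bound ψ(z) ≥ (e^{z²} − 1)/(4z²) − 1/2. -/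
/-!
On `[0, z]` the weight `s / z` is at most `1`, and inserting it makes the Gaussian-type integrals
elementary: `∫₀^τ e^{-s²} ≥ (1/z) ∫₀^τ s e^{-s²} = (1 - e^{-τ²}) / (2z)`, so the integrand of `ψ`
is at least `(e^{τ²} - 1) / (2z)`. Integrating, `ψ(z) ≥ (∫₀^z e^{τ²} - z) / (2z)`, and the same
trick gives `∫₀^z e^{τ²} ≥ (e^{z²} - 1) / (2z)`.
-/

open Real intervalIntegral MeasureTheory

theorem integral_mul_exp_mul_sq {c : ℝ} (hc : c ≠ 0) (τ : ℝ) :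
    ∫ s in (0:ℝ)..τ, s * exp (c * s ^ 2) = (exp (c * τ ^ 2) - 1) / (2 * c) := by
  have hderiv (x : ℝ) :
      HasDerivAt (fun s ↦ exp (c * s ^ 2) / (2 * c)) (x * exp (c * x ^ 2)) x := by
    refine (((hasDerivAt_pow 2 x).const_mul c).exp.div_const (2 * c)).congr_deriv ?_
    field_simp
    ring
  rw [integral_eq_sub_of_hasDerivAt (fun x _ ↦ hderiv x)
    (Continuous.intervalIntegrable (by fun_prop) 0 τ)]
  simp [sub_div]

theorem integral_mul_le_mul_integral {f : ℝ → ℝ} {τ z : ℝ} (hτ : 0 ≤ τ) (hτz : τ ≤ z)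
    (hf : IntervalIntegrable f volume 0 τ) (hf_nonneg : ∀ s ∈ Set.Icc 0 τ, 0 ≤ f s) :
    ∫ s in (0:ℝ)..τ, s * f s ≤ z * ∫ s in (0:ℝ)..τ, f s := by
  rw [← intervalIntegral.integral_const_mul]
  refine integral_mono_on hτ (hf.continuousOn_mul continuousOn_id) (hf.const_mul z) ?_
  intro s hs
  exact mul_le_mul_of_nonneg_right (hs.2.trans hτz) (hf_nonneg s hs)

theorem exp_sq_sub_one_div_le_mul_integral_exp_neg_sq {τ z : ℝ} (hz : 0 < z) (hτ : 0 ≤ τ)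
    (hτz : τ ≤ z) :
    (exp (τ ^ 2) - 1) / (2 * z) ≤ exp (τ ^ 2) * ∫ s in (0:ℝ)..τ, exp (-s ^ 2) := by
  have hmoment : (1 - exp (-τ ^ 2)) / 2 ≤ z * ∫ s in (0:ℝ)..τ, exp (-s ^ 2) := by
    have h := integral_mul_le_mul_integral hτ hτz
      (Continuous.intervalIntegrable (by fun_prop) 0 τ) (fun s _ ↦ (exp_pos (-1 * s ^ 2)).le)
    rw [integral_mul_exp_mul_sq (by norm_num)] at h
    simp only [neg_one_mul] at h
    convert h using 1
    ring
  have hcancel : exp (τ ^ 2) * exp (-τ ^ 2) = 1 := by rw [← exp_add, add_neg_cancel, exp_zero]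
  rw [div_le_iff₀ (by positivity)]
  nlinarith [exp_pos (τ ^ 2)]

theorem exp_sq_sub_one_div_le_integral_exp_sq {z : ℝ} (hz : 0 < z) :
    (exp (z ^ 2) - 1) / (2 * z) ≤ ∫ τ in (0:ℝ)..z, exp (τ ^ 2) := by
  have h := integral_mul_le_mul_integral hz.le le_rfl
    (Continuous.intervalIntegrable (by fun_prop) 0 z) (fun τ _ ↦ (exp_pos (1 * τ ^ 2)).le)
  rw [integral_mul_exp_mul_sq one_ne_zero] at h
  simp only [one_mul] at h
  rw [div_le_iff₀ (by positivity)]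
  linarith

/-- For every `z > 0`, `ψ(z) = ∫₀^z ∫₀^τ e^{τ²} e^{−s²} ds dτ` satisfies
`ψ(z) ≥ (e^{z²} − 1)/(4z²) − 1/2`. -/
theorem psi_lower_bound (z : ℝ) (hz : 0 < z) :
    (Real.exp (z ^ 2) - 1) / (4 * z ^ 2) - 1 / 2
      ≤ ∫ τ in (0:ℝ)..z, Real.exp (τ ^ 2) * ∫ s in (0:ℝ)..τ, Real.exp (-s ^ 2) := by
  have hG : Continuous fun τ : ℝ ↦ ∫ s in (0:ℝ)..τ, exp (-s ^ 2) :=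
    continuous_primitive (fun a b ↦ Continuous.intervalIntegrable (by fun_prop) a b) 0
  have hpointwise : ∫ τ in (0:ℝ)..z, (exp (τ ^ 2) - 1) / (2 * z)
      ≤ ∫ τ in (0:ℝ)..z, exp (τ ^ 2) * ∫ s in (0:ℝ)..τ, exp (-s ^ 2) :=
    integral_mono_on hz.le (Continuous.intervalIntegrable (by fun_prop) 0 z)
      (Continuous.intervalIntegrable (by fun_prop) 0 z)
      fun τ hτ ↦ exp_sq_sub_one_div_le_mul_integral_exp_neg_sq hz hτ.1 hτ.2
  have hcompute : ∫ τ in (0:ℝ)..z, (exp (τ ^ 2) - 1) / (2 * z)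
      = ((∫ τ in (0:ℝ)..z, exp (τ ^ 2)) - z) / (2 * z) := by
    rw [intervalIntegral.integral_div,
      integral_sub (Continuous.intervalIntegrable (by fun_prop) 0 z) intervalIntegrable_const,
      intervalIntegral.integral_const, smul_eq_mul, sub_zero, mul_one]
  calc (exp (z ^ 2) - 1) / (4 * z ^ 2) - 1 / 2
      = ((exp (z ^ 2) - 1) / (2 * z) - z) / (2 * z) := by field_simp; ring
    _ ≤ ((∫ τ in (0:ℝ)..z, exp (τ ^ 2)) - z) / (2 * z) := by
      gcongr
      exact exp_sq_sub_one_div_le_integral_exp_sq hz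
    _ ≤ _ := hcompute ▸ hpointwise
end

section
/- (Upper bound on the Ornstein–Uhlenbeck mean first passage time.) For every μ > 0 and every threshold η > 0, the quantity T̄(η) = (2/μ)·(√π·φ(η√(μ/2)) + ψ(η√(μ/2))) satisfies T̄(η) ≤ (3√π·η/√(2μ))·e^{η²μ/2}. -/
open Real MeasureTheory intervalIntegral Set

lemma gauss_half_bound (τ : ℝ) (hτ : 0 ≤ τ) :
    (∫ s in (0:ℝ)..τ, Real.exp (-s ^ 2)) ≤ Real.sqrt Real.pi / 2 := by
  have hint : IntegrableOn (fun s : ℝ => Real.exp (-s ^ 2)) (Ioi 0) := by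
    have := (integrable_exp_neg_mul_sq (one_pos)).integrableOn (s := Ioi (0:ℝ))
    simpa using this
  have h1 : (∫ s in (0:ℝ)..τ, Real.exp (-s ^ 2))
      = ∫ s in Ioc (0:ℝ) τ, Real.exp (-s ^ 2) := by
    rw [intervalIntegral.integral_of_le hτ]
  have h2 : (∫ s in Ioc (0:ℝ) τ, Real.exp (-s ^ 2))
      ≤ ∫ s in Ioi (0:ℝ), Real.exp (-s ^ 2) := by
    apply setIntegral_mono_set hint
    · filter_upwards with x using (Real.exp_pos _).le
    · exact Filter.Eventually.of_forall Ioc_subset_Ioi_self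
  have h3 : (∫ s in Ioi (0:ℝ), Real.exp (-s ^ 2)) = Real.sqrt Real.pi / 2 := by
    have := integral_gaussian_Ioi 1
    simpa using this
  rw [h1]; rw [h3] at h2; exact h2

/-- **Upper bound on the O–U mean first passage time.**
For every `μ > 0` and threshold `η > 0`, the mean first passage time
`T̄(η) = (2/μ)(√π·φ(η√(μ/2)) + ψ(η√(μ/2)))`, with `φ(z) = ∫₀^z e^{τ²} dτ` and
`ψ(z) = ∫₀^z ∫₀^τ e^{τ²} e^{−s²} ds dτ`, satisfies
`T̄(η) ≤ (3√π·η/√(2μ))·e^{η²μ/2}`. -/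
theorem ou_mean_first_passage_time_upper_bound (μ η : ℝ) (hμ : 0 < μ) (hη : 0 < η) :
    2 / μ * (Real.sqrt Real.pi * (∫ τ in (0:ℝ)..(η * Real.sqrt (μ / 2)), Real.exp (τ ^ 2))
        + ∫ τ in (0:ℝ)..(η * Real.sqrt (μ / 2)),
            Real.exp (τ ^ 2) * ∫ s in (0:ℝ)..τ, Real.exp (-s ^ 2))
      ≤ 3 * Real.sqrt Real.pi * η / Real.sqrt (2 * μ) * Real.exp (η ^ 2 * μ / 2) := by
  set z := η * Real.sqrt (μ / 2) with hzdef
  have hz : 0 < z := mul_pos hη (Real.sqrt_pos.2 (by positivity))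
  have hz2 : z ^ 2 = η ^ 2 * μ / 2 := by
    rw [hzdef, mul_pow, Real.sq_sqrt (by positivity : (0:ℝ) ≤ μ / 2)]; ring
  have hcont : Continuous fun τ : ℝ => Real.exp (τ ^ 2) :=
    Real.continuous_exp.comp (continuous_pow 2)
  have hI1int : IntervalIntegrable (fun τ : ℝ => Real.exp (τ ^ 2)) volume 0 z :=
    hcont.intervalIntegrable 0 z
  -- bound on φ
  have hI1 : (∫ τ in (0:ℝ)..z, Real.exp (τ ^ 2)) ≤ z * Real.exp (z ^ 2) := by
    have := intervalIntegral.integral_mono_on hz.le hI1int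
      (_root_.intervalIntegrable_const (c := Real.exp (z ^ 2)))
      (fun x hx => Real.exp_le_exp.2 (by
        have h1 : 0 ≤ x := hx.1
        have h2 : x ≤ z := hx.2
        nlinarith))
    simpa [mul_comm] using this
  -- continuity of primitive
  have hcontprim : Continuous fun τ : ℝ => ∫ s in (0:ℝ)..τ, Real.exp (-s ^ 2) := by
    apply intervalIntegral.continuous_primitive
    intro a b
    exact (Real.continuous_exp.comp (by continuity)).intervalIntegrable a b
  have hI2int : IntervalIntegrable
      (fun τ : ℝ => Real.exp (τ ^ 2) * ∫ s in (0:ℝ)..τ, Real.exp (-s ^ 2)) volume 0 z :=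
    (hcont.mul hcontprim).intervalIntegrable 0 z
  -- bound on ψ
  have hI2 : (∫ τ in (0:ℝ)..z, Real.exp (τ ^ 2) * ∫ s in (0:ℝ)..τ, Real.exp (-s ^ 2))
      ≤ Real.sqrt Real.pi / 2 * (z * Real.exp (z ^ 2)) := by
    have step1 : (∫ τ in (0:ℝ)..z, Real.exp (τ ^ 2) * ∫ s in (0:ℝ)..τ, Real.exp (-s ^ 2))
        ≤ ∫ τ in (0:ℝ)..z, Real.sqrt Real.pi / 2 * Real.exp (τ ^ 2) := by
      apply intervalIntegral.integral_mono_on hz.le hI2int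
        ((continuous_const.mul hcont).intervalIntegrable 0 z)
      intro x hx
      have hb := gauss_half_bound x hx.1
      have hpos := (Real.exp_pos (x ^ 2)).le
      calc Real.exp (x ^ 2) * ∫ s in (0:ℝ)..x, Real.exp (-s ^ 2)
          ≤ Real.exp (x ^ 2) * (Real.sqrt Real.pi / 2) := by
            apply mul_le_mul_of_nonneg_left hb hpos
        _ = Real.sqrt Real.pi / 2 * Real.exp (x ^ 2) := by ring
    have step2 : (∫ τ in (0:ℝ)..z, Real.sqrt Real.pi / 2 * Real.exp (τ ^ 2))
        = Real.sqrt Real.pi / 2 * ∫ τ in (0:ℝ)..z, Real.exp (τ ^ 2) := by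
      rw [intervalIntegral.integral_const_mul]
    calc _ ≤ Real.sqrt Real.pi / 2 * ∫ τ in (0:ℝ)..z, Real.exp (τ ^ 2) := by
          rw [← step2]; exact step1
      _ ≤ Real.sqrt Real.pi / 2 * (z * Real.exp (z ^ 2)) := by
          apply mul_le_mul_of_nonneg_left hI1 (by positivity)
  -- combine
  have hsum : 2 / μ * (Real.sqrt Real.pi * (∫ τ in (0:ℝ)..z, Real.exp (τ ^ 2))
        + ∫ τ in (0:ℝ)..z, Real.exp (τ ^ 2) * ∫ s in (0:ℝ)..τ, Real.exp (-s ^ 2))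
      ≤ 2 / μ * (3 / 2 * Real.sqrt Real.pi * (z * Real.exp (z ^ 2))) := by
    apply mul_le_mul_of_nonneg_left _ (by positivity)
    nlinarith [hI1, hI2, Real.sqrt_nonneg Real.pi]
  refine hsum.trans (le_of_eq ?_)
  rw [hz2, hzdef]
  have hsq : Real.sqrt (μ / 2) * Real.sqrt (2 * μ) = μ := by
    rw [← Real.sqrt_mul (by positivity) (2 * μ)]
    rw [show μ / 2 * (2 * μ) = μ ^ 2 by ring, Real.sqrt_sq hμ.le]
  have h2μ : 0 < Real.sqrt (2 * μ) := Real.sqrt_pos.2 (by positivity)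
  have hrw : Real.sqrt (μ / 2) = μ / Real.sqrt (2 * μ) := by
    rw [eq_div_iff h2μ.ne']; exact hsq
  rw [hrw]
  field_simp
end
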